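/- arXiv:1811.04545 — 5 statements merged into one kernel-verified Lean document; each statement's English description precedes it below -/
import Mathlib

section
/- Let S = UΛUᵀ with UᵀU = I_m. For any ρ > 0, the p²×p² matrix 2⁻¹S⊗I_p + 2⁻¹I_p⊗S + ρI_{p²} is invertible with inverse equal to ρ⁻¹I_{p²} − ρ⁻¹(UΛ₂Uᵀ)⊗I_p − ρ⁻¹I_p⊗(UΛ₂Uᵀ) + ρ⁻¹(U⊗U)·diag{vec(Λ₃)}·(Uᵀ⊗Uᵀ); equivalently, the product of 2⁻¹S⊗I_p + 2⁻¹I_p⊗S + ρI_{p²} with this matrix (in either order) equals I_{p²}. -/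
/-!
With `A = U Λ₂ Uᵀ`, the identity `Λ Λ₂ + 2ρ Λ₂ = Λ` together with `Uᵀ U = 1` gives
`S A + 2ρ A = S`, which absorbs the products of `T` with `A ⊗ I` and `I ⊗ A`.
On the columns of `U ⊗ U` the matrix `T` acts diagonally with eigenvalues `(τᵢ + τⱼ)/2 + ρ`,
and these times the entries of `Λ₃` are the entries of `(Λ₂ ⊗ Λ + Λ ⊗ Λ₂)/2`; hence
`T (U ⊗ U) diag(vec Λ₃) (Uᵀ ⊗ Uᵀ) = (A ⊗ S + S ⊗ A)/2`, exactly the remaining cross terms.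
So `T R = 1`, and a square matrix with a right inverse is invertible.
-/

open Matrix Kronecker

theorem smul_one_add_mul_inv_smul_one_sub_sub_add {K R : Type*} [Field K] [NeZero (2 : K)]
    [Ring R] [Algebra K R] {x y a b c : R} {ρ : K} (hρ : ρ ≠ 0)
    (hxa : x * a = x - (2 * ρ) • a) (hyb : y * b = y - (2 * ρ) • b)
    (hc : ((2⁻¹ : K) • x + (2⁻¹ : K) • y + ρ • 1) * c = (2⁻¹ : K) • (y * a + x * b)) :
    ((2⁻¹ : K) • x + (2⁻¹ : K) • y + ρ • 1) * (ρ⁻¹ • 1 - ρ⁻¹ • a - ρ⁻¹ • b + ρ⁻¹ • c) = 1 := by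
  suffices h : ((2⁻¹ : K) • x + (2⁻¹ : K) • y + ρ • 1) * (1 - a - b + c) = ρ • 1 by
    rw [show ρ⁻¹ • 1 - ρ⁻¹ • a - ρ⁻¹ • b + ρ⁻¹ • c = ρ⁻¹ • (1 - a - b + c) by module,
      mul_smul_comm, h, smul_smul, inv_mul_cancel₀ hρ, one_smul]
  have h2 : (2⁻¹ : K) * 2 = 1 := inv_mul_cancel₀ two_ne_zero
  rw [mul_add, mul_sub, mul_sub, mul_one, hc]
  simp only [add_mul, smul_mul_assoc, one_mul, hxa, hyb, smul_sub, smul_smul, ← mul_assoc, h2,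
    one_mul]
  module

namespace Matrix

variable {n m : Type*} [Fintype m]

theorem kronecker_conj {α : Type*} [CommSemiring α] (U : Matrix n m α) (A B : Matrix m m α) :
    (U * A * Uᵀ) ⊗ₖ (U * B * Uᵀ) = (U ⊗ₖ U) * (A ⊗ₖ B) * (Uᵀ ⊗ₖ Uᵀ) := by
  rw [mul_kronecker_mul, mul_kronecker_mul]

variable [Fintype n]

theorem conj_mul_conj {α : Type*} [Semiring α] [DecidableEq m] {U : Matrix n m α}
    (hU : Uᵀ * U = 1) (A B : Matrix m m α) : U * A * Uᵀ * (U * B * Uᵀ) = U * (A * B) * Uᵀ := by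
  simp only [Matrix.mul_assoc]
  rw [← Matrix.mul_assoc Uᵀ, hU, Matrix.one_mul]

variable {K : Type*} [Field K] [DecidableEq m] {U : Matrix n m K} {τ : m → K} {ρ : K}

theorem conj_diagonal_mul_conj_resolvent (hU : Uᵀ * U = 1) (hτρ : ∀ i, τ i + 2 * ρ ≠ 0) :
    U * diagonal τ * Uᵀ * (U * diagonal (fun i => τ i / (τ i + 2 * ρ)) * Uᵀ)
      + (2 * ρ) • (U * diagonal (fun i => τ i / (τ i + 2 * ρ)) * Uᵀ) = U * diagonal τ * Uᵀ := by
  rw [conj_mul_conj hU, diagonal_mul_diagonal, ← Matrix.smul_mul, ← Matrix.mul_smul,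
    ← Matrix.add_mul, ← Matrix.mul_add, ← diagonal_smul, diagonal_add]
  congr 3
  funext i
  have := hτρ i
  simp only [Pi.smul_apply, smul_eq_mul]
  field_simp

theorem kroneckerSum_mul_kronecker [DecidableEq n] {S : Matrix n n K}
    (hSU : S * U = U * diagonal τ) :
    ((2⁻¹ : K) • (S ⊗ₖ (1 : Matrix n n K)) + (2⁻¹ : K) • ((1 : Matrix n n K) ⊗ₖ S) + ρ • 1)
        * (U ⊗ₖ U)
      = (U ⊗ₖ U) * diagonal (fun q : m × m => 2⁻¹ * τ q.1 + 2⁻¹ * τ q.2 + ρ) := by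
  have hdiag : diagonal (fun q : m × m => 2⁻¹ * τ q.1 + 2⁻¹ * τ q.2 + ρ)
      = (2⁻¹ : K) • (diagonal τ ⊗ₖ (1 : Matrix m m K))
        + (2⁻¹ : K) • ((1 : Matrix m m K) ⊗ₖ diagonal τ) + ρ • 1 := by
    ext ⟨i, j⟩ ⟨k, l⟩
    by_cases hik : i = k <;> by_cases hjl : j = l <;>
      simp [kroneckerMap_apply, hik, hjl]
  simp only [hdiag, Matrix.add_mul, Matrix.mul_add, Matrix.smul_mul, Matrix.mul_smul,
    ← mul_kronecker_mul, hSU, Matrix.one_mul, Matrix.mul_one]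

theorem kroneckerSum_mul_conj_diagonal [DecidableEq n] [NeZero (2 : K)] (hU : Uᵀ * U = 1)
    (hτρ : ∀ i, τ i + 2 * ρ ≠ 0) (hττρ : ∀ i j, τ i + τ j + 2 * ρ ≠ 0) {S A : Matrix n n K}
    (hS : S = U * diagonal τ * Uᵀ) (hA : A = U * diagonal (fun i => τ i / (τ i + 2 * ρ)) * Uᵀ) :
    ((2⁻¹ : K) • (S ⊗ₖ (1 : Matrix n n K)) + (2⁻¹ : K) • ((1 : Matrix n n K) ⊗ₖ S) + ρ • 1)
        * ((U ⊗ₖ U) * diagonal (fun q : m × m => τ q.1 * τ q.2 * (τ q.1 + τ q.2 + 4 * ρ) /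
            ((τ q.1 + 2 * ρ) * (τ q.2 + 2 * ρ) * (τ q.1 + τ q.2 + 2 * ρ))) * (Uᵀ ⊗ₖ Uᵀ))
      = (2⁻¹ : K) • (A ⊗ₖ S + S ⊗ₖ A) := by
  have hSU : S * U = U * diagonal τ := by
    rw [hS, Matrix.mul_assoc, Matrix.mul_assoc, hU, Matrix.mul_one]
  have hentries : diagonal (fun q : m × m => 2⁻¹ * τ q.1 + 2⁻¹ * τ q.2 + ρ)
      * diagonal (fun q : m × m => τ q.1 * τ q.2 * (τ q.1 + τ q.2 + 4 * ρ) /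
          ((τ q.1 + 2 * ρ) * (τ q.2 + 2 * ρ) * (τ q.1 + τ q.2 + 2 * ρ)))
      = (2⁻¹ : K) • (diagonal (fun i => τ i / (τ i + 2 * ρ)) ⊗ₖ diagonal τ
        + diagonal τ ⊗ₖ diagonal (fun i => τ i / (τ i + 2 * ρ))) := by
    rw [diagonal_mul_diagonal, diagonal_kronecker_diagonal, diagonal_kronecker_diagonal,
      diagonal_add, ← diagonal_smul]
    congr 1
    funext ⟨i, j⟩
    have := hτρ i
    have := hτρ j
    have := hττρ i j
    simp only [Pi.smul_apply, smul_eq_mul]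
    field_simp
    ring
  simp only [← Matrix.mul_assoc]
  rw [kroneckerSum_mul_kronecker hSU]
  simp only [Matrix.mul_assoc]
  rw [← Matrix.mul_assoc (diagonal _), hentries, hS, hA, kronecker_conj, kronecker_conj]
  simp only [Matrix.mul_add, Matrix.add_mul, Matrix.mul_smul, Matrix.smul_mul, Matrix.mul_assoc]

end Matrix

theorem stmt_1_general (p m : ℕ)
    (U : Matrix (Fin p) (Fin m) ℝ) (hU : Uᵀ * U = 1)
    (τ : Fin m → ℝ) (hτ : ∀ i, 0 ≤ τ i)
    (Λ : Matrix (Fin m) (Fin m) ℝ) (hΛ : Λ = Matrix.diagonal τ)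
    (S : Matrix (Fin p) (Fin p) ℝ) (hS : S = U * Λ * Uᵀ)
    (ρ : ℝ) (hρ : 0 < ρ)
    (Λ₂ : Matrix (Fin m) (Fin m) ℝ)
    (hΛ₂ : Λ₂ = Matrix.diagonal (fun i => τ i / (τ i + 2 * ρ)))
    (Λ₃ : Matrix (Fin m) (Fin m) ℝ)
    (hΛ₃ : Λ₃ = fun i j => τ i * τ j * (τ i + τ j + 4 * ρ) /
      ((τ i + 2 * ρ) * (τ j + 2 * ρ) * (τ i + τ j + 2 * ρ)))
    (T R : Matrix (Fin p × Fin p) (Fin p × Fin p) ℝ)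
    (hT : T = (2⁻¹ : ℝ) • (S ⊗ₖ (1 : Matrix (Fin p) (Fin p) ℝ))
      + (2⁻¹ : ℝ) • ((1 : Matrix (Fin p) (Fin p) ℝ) ⊗ₖ S)
      + ρ • (1 : Matrix (Fin p × Fin p) (Fin p × Fin p) ℝ))
    (hR : R = ρ⁻¹ • (1 : Matrix (Fin p × Fin p) (Fin p × Fin p) ℝ)
      - ρ⁻¹ • ((U * Λ₂ * Uᵀ) ⊗ₖ (1 : Matrix (Fin p) (Fin p) ℝ))
      - ρ⁻¹ • ((1 : Matrix (Fin p) (Fin p) ℝ) ⊗ₖ (U * Λ₂ * Uᵀ))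
      + ρ⁻¹ • ((U ⊗ₖ U)
          * Matrix.diagonal (fun q : Fin m × Fin m => Λ₃ q.1 q.2)
          * (Uᵀ ⊗ₖ Uᵀ))) :
    IsUnit T ∧ T⁻¹ = R ∧ T * R = 1 ∧ R * T = 1 := by
  subst hΛ hS hΛ₂ hΛ₃
  have hτρ (i) : τ i + 2 * ρ ≠ 0 := by linarith [hτ i]
  have hττρ (i j) : τ i + τ j + 2 * ρ ≠ 0 := by linarith [hτ i, hτ j]
  set S := U * diagonal τ * Uᵀ with hS
  set A := U * diagonal (fun i => τ i / (τ i + 2 * ρ)) * Uᵀ with hA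
  have hSA : S * A + (2 * ρ) • A = S := conj_diagonal_mul_conj_resolvent hU hτρ
  have hxa : (S ⊗ₖ 1) * (A ⊗ₖ 1) + (2 * ρ) • (A ⊗ₖ (1 : Matrix (Fin p) (Fin p) ℝ))
      = S ⊗ₖ 1 := by
    rw [← mul_kronecker_mul, Matrix.mul_one, ← smul_kronecker, ← add_kronecker, hSA]
  have hyb : (1 ⊗ₖ S) * (1 ⊗ₖ A) + (2 * ρ) • ((1 : Matrix (Fin p) (Fin p) ℝ) ⊗ₖ A)
      = 1 ⊗ₖ S := by
    rw [← mul_kronecker_mul, Matrix.mul_one, ← kronecker_smul, ← kronecker_add, hSA]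
  have hya : (1 ⊗ₖ S) * (A ⊗ₖ 1) = A ⊗ₖ S := by
    rw [← mul_kronecker_mul, Matrix.one_mul, Matrix.mul_one]
  have hxb : (S ⊗ₖ 1) * (1 ⊗ₖ A) = S ⊗ₖ A := by
    rw [← mul_kronecker_mul, Matrix.one_mul, Matrix.mul_one]
  have hc := kroneckerSum_mul_conj_diagonal hU hτρ hττρ hS hA
  rw [← hya, ← hxb] at hc
  have hTR : T * R = 1 := by
    rw [hT, hR]
    exact smul_one_add_mul_inv_smul_one_sub_sub_add hρ.ne' (eq_sub_of_add_eq hxa)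
      (eq_sub_of_add_eq hyb) hc
  have hRT : R * T = 1 := mul_eq_one_comm.mp hTR
  exact ⟨⟨⟨T, R, hTR, hRT⟩, rfl⟩, inv_eq_right_inv hTR, hTR, hRT⟩

/-- With `S = U Λ Uᵀ`, `Uᵀ U = I_m`, and `ρ > 0`, the `p²×p²` matrix
`2⁻¹ S⊗I + 2⁻¹ I⊗S + ρ I` is invertible with inverse
`ρ⁻¹ I − ρ⁻¹ (UΛ₂Uᵀ)⊗I − ρ⁻¹ I⊗(UΛ₂Uᵀ) + ρ⁻¹ (U⊗U) diag{vec(Λ₃)} (Uᵀ⊗Uᵀ)`;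
equivalently, the products in both orders equal the identity. -/
theorem stmt_1 (p m : ℕ) (hp : 0 < p) (hm : 0 < m)
    (U : Matrix (Fin p) (Fin m) ℝ) (hU : Uᵀ * U = 1)
    (τ : Fin m → ℝ) (hτ : ∀ i, 0 ≤ τ i)
    (Λ : Matrix (Fin m) (Fin m) ℝ) (hΛ : Λ = Matrix.diagonal τ)
    (S : Matrix (Fin p) (Fin p) ℝ) (hS : S = U * Λ * Uᵀ)
    (ρ : ℝ) (hρ : 0 < ρ)
    (Λ₂ : Matrix (Fin m) (Fin m) ℝ)
    (hΛ₂ : Λ₂ = Matrix.diagonal (fun i => τ i / (τ i + 2 * ρ)))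
    (Λ₃ : Matrix (Fin m) (Fin m) ℝ)
    (hΛ₃ : Λ₃ = fun i j => τ i * τ j * (τ i + τ j + 4 * ρ) /
      ((τ i + 2 * ρ) * (τ j + 2 * ρ) * (τ i + τ j + 2 * ρ)))
    (T R : Matrix (Fin p × Fin p) (Fin p × Fin p) ℝ)
    (hT : T = (2⁻¹ : ℝ) • (S ⊗ₖ (1 : Matrix (Fin p) (Fin p) ℝ))
      + (2⁻¹ : ℝ) • ((1 : Matrix (Fin p) (Fin p) ℝ) ⊗ₖ S)
      + ρ • (1 : Matrix (Fin p × Fin p) (Fin p × Fin p) ℝ))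
    (hR : R = ρ⁻¹ • (1 : Matrix (Fin p × Fin p) (Fin p × Fin p) ℝ)
      - ρ⁻¹ • ((U * Λ₂ * Uᵀ) ⊗ₖ (1 : Matrix (Fin p) (Fin p) ℝ))
      - ρ⁻¹ • ((1 : Matrix (Fin p) (Fin p) ℝ) ⊗ₖ (U * Λ₂ * Uᵀ))
      + ρ⁻¹ • ((U ⊗ₖ U)
          * Matrix.diagonal (fun q : Fin m × Fin m => Λ₃ q.1 q.2)
          * (Uᵀ ⊗ₖ Uᵀ))) :
    IsUnit T ∧ T⁻¹ = R ∧ T * R = 1 ∧ R * T = 1 :=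
  stmt_1_general p m U hU τ hτ Λ hΛ S hS ρ hρ Λ₂ hΛ₂ Λ₃ hΛ₃ T R hT hR
end

section
/- Let S = UΛUᵀ with UᵀU = I_m, let ρ > 0, and let C be any real p×p matrix. Then the matrix Ω = ρ⁻¹C − ρ⁻¹CUΛ₂Uᵀ − ρ⁻¹UΛ₂UᵀC + ρ⁻¹U{Λ₃ ∘ (UᵀCU)}Uᵀ satisfies the equation 2⁻¹SΩ + 2⁻¹ΩS + ρΩ = C. -/
/-!
Write `L_S(X) = ½(SX + XS) + ρX`. Because `UᵀU = I`, multiplying out `L_S(Ω)` for `S = UΛUᵀ`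
leaves `C` plus three correction terms: `U(½(Λ - ΛΛ₂) - ρΛ₂)UᵀC`, its mirror image, and
`U(L_Λ(X) - ½(ΛMΛ₂ + Λ₂MΛ))Uᵀ` with `M = UᵀCU` and `X = Λ₃ ∘ M`. The first two vanish because
`x = τ/(τ + 2ρ)` solves `½τ(1 - x) = ρx`. The third vanishes because `L_Λ` acts on the entry
`(i, j)` as multiplication by `½(τᵢ + τⱼ) + ρ`, and `Λ₃` is exactly the entrywise quotient that
cancels `½(ΛMΛ₂ + Λ₂MΛ)`.
-/

open Matrix

variable {K m n : Type*} [Field K] [Fintype m] [DecidableEq m] [Fintype n]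

theorem sylvester_conj_solution {ρ : K} (hρ : ρ ≠ 0)
    {U : Matrix n m K} (hU : Uᵀ * U = 1) {Λ Λ₂ X : Matrix m m K} (C : Matrix n n K)
    (hΛ₂ : (2⁻¹ : K) • (Λ - Λ * Λ₂) = ρ • Λ₂) (hcomm : Commute Λ Λ₂)
    (hX : (2⁻¹ : K) • (Λ * X + X * Λ) + ρ • X =
      (2⁻¹ : K) • (Λ * (Uᵀ * C * U) * Λ₂ + Λ₂ * (Uᵀ * C * U) * Λ))
    {Ω : Matrix n n K}
    (hΩ : Ω = ρ⁻¹ • C - ρ⁻¹ • (C * U * Λ₂ * Uᵀ) - ρ⁻¹ • (U * Λ₂ * Uᵀ * C)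
      + ρ⁻¹ • (U * X * Uᵀ)) :
    (2⁻¹ : K) • (U * Λ * Uᵀ * Ω) + (2⁻¹ : K) • (Ω * (U * Λ * Uᵀ)) + ρ • Ω = C := by
  have hUU : ∀ Y : Matrix m n K, Uᵀ * (U * Y) = Y := fun Y => by
    rw [← Matrix.mul_assoc, hU, Matrix.one_mul]
  have hΛ₂' : (2⁻¹ : K) • (Λ - Λ₂ * Λ) = ρ • Λ₂ := hcomm.eq ▸ hΛ₂
  have expand : (2⁻¹ : K) • (U * Λ * Uᵀ * Ω) + (2⁻¹ : K) • (Ω * (U * Λ * Uᵀ)) + ρ • Ω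
      = C + ρ⁻¹ • (U * ((2⁻¹ : K) • (Λ - Λ * Λ₂) - ρ • Λ₂) * (Uᵀ * C)
          + C * U * ((2⁻¹ : K) • (Λ - Λ₂ * Λ) - ρ • Λ₂) * Uᵀ
          + U * ((2⁻¹ : K) • (Λ * X + X * Λ) + ρ • X -
              (2⁻¹ : K) • (Λ * (Uᵀ * C * U) * Λ₂ + Λ₂ * (Uᵀ * C * U) * Λ)) * Uᵀ) := by
    subst hΩ
    simp only [Matrix.mul_sub, Matrix.sub_mul, Matrix.mul_add, Matrix.add_mul,
      Matrix.mul_smul, Matrix.smul_mul, smul_sub, smul_add, smul_smul, Matrix.mul_assoc, hUU]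
    simp only [inv_mul_cancel₀ hρ, mul_inv_cancel₀ hρ, one_smul]
    module
  rw [expand, hΛ₂, hΛ₂', hX]
  simp

theorem half_smul_diagonal_sub_mul_diagonal_div [NeZero (2 : K)] {τ : m → K} {ρ : K}
    (hτ : ∀ i, τ i + 2 * ρ ≠ 0) :
    (2⁻¹ : K) • (diagonal τ - diagonal τ * diagonal (fun i => τ i / (τ i + 2 * ρ))) =
      ρ • diagonal (fun i => τ i / (τ i + 2 * ρ)) := by
  rw [diagonal_mul_diagonal, diagonal_sub, ← diagonal_smul, ← diagonal_smul]
  congr 1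
  ext i
  simp only [Pi.smul_apply, smul_eq_mul]
  field_simp [hτ i]
  ring

/-- Entrywise this says `(½(τᵢ + τⱼ) + ρ) Λ₃ᵢⱼ = ½ τᵢ τⱼ (1/(τᵢ + 2ρ) + 1/(τⱼ + 2ρ))`, which is
where the formula for `Λ₃` comes from. -/
theorem sylvester_diagonal_hadamard [NeZero (2 : K)] {τ : m → K} {ρ : K}
    (hτ : ∀ i, τ i + 2 * ρ ≠ 0) (hττ : ∀ i j, τ i + τ j + 2 * ρ ≠ 0) {Λ₃ : Matrix m m K}
    (hΛ₃ : Λ₃ = of fun i j => τ i * τ j * (τ i + τ j + 4 * ρ) /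
      ((τ i + 2 * ρ) * (τ j + 2 * ρ) * (τ i + τ j + 2 * ρ))) (M : Matrix m m K) :
    (2⁻¹ : K) • (diagonal τ * (Λ₃ ⊙ M) + (Λ₃ ⊙ M) * diagonal τ) + ρ • (Λ₃ ⊙ M) =
      (2⁻¹ : K) • (diagonal τ * M * diagonal (fun i => τ i / (τ i + 2 * ρ)) +
        diagonal (fun i => τ i / (τ i + 2 * ρ)) * M * diagonal τ) := by
  ext i j
  simp only [hΛ₃, Matrix.add_apply, Matrix.smul_apply, diagonal_mul, mul_diagonal,
    hadamard_apply, of_apply, smul_eq_mul]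
  field_simp [hτ i, hτ j, hττ i j]
  ring

theorem stmt_4_general (p m : ℕ)
    (U : Matrix (Fin p) (Fin m) ℝ) (hU : Uᵀ * U = 1)
    (τ : Fin m → ℝ) (hτ : ∀ i, 0 ≤ τ i)
    (Λ : Matrix (Fin m) (Fin m) ℝ) (hΛ : Λ = Matrix.diagonal τ)
    (S : Matrix (Fin p) (Fin p) ℝ) (hS : S = U * Λ * Uᵀ)
    (ρ : ℝ) (hρ : 0 < ρ)
    (Λ₂ : Matrix (Fin m) (Fin m) ℝ)
    (hΛ₂ : Λ₂ = Matrix.diagonal (fun i => τ i / (τ i + 2 * ρ)))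
    (Λ₃ : Matrix (Fin m) (Fin m) ℝ)
    (hΛ₃ : Λ₃ = fun i j => τ i * τ j * (τ i + τ j + 4 * ρ) /
      ((τ i + 2 * ρ) * (τ j + 2 * ρ) * (τ i + τ j + 2 * ρ)))
    (C : Matrix (Fin p) (Fin p) ℝ)
    (Ω : Matrix (Fin p) (Fin p) ℝ)
    (hΩ : Ω = ρ⁻¹ • C - ρ⁻¹ • (C * U * Λ₂ * Uᵀ) - ρ⁻¹ • (U * Λ₂ * Uᵀ * C)
      + ρ⁻¹ • (U * (Matrix.hadamard Λ₃ (Uᵀ * C * U)) * Uᵀ)) :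
    (2⁻¹ : ℝ) • (S * Ω) + (2⁻¹ : ℝ) • (Ω * S) + ρ • Ω = C := by
  have hτρ : ∀ i, τ i + 2 * ρ ≠ 0 := fun i => by linarith [hτ i]
  have hττρ : ∀ i j, τ i + τ j + 2 * ρ ≠ 0 := fun i j => by linarith [hτ i, hτ j]
  subst hΛ hΛ₂ hS
  exact sylvester_conj_solution hρ.ne' hU C (half_smul_diagonal_sub_mul_diagonal_div hτρ)
    (commute_diagonal _ _) (sylvester_diagonal_hadamard hτρ hττρ hΛ₃ _) hΩ

/-- With `S = U Λ Uᵀ`, `Uᵀ U = I_m`, `ρ > 0`, and any `C`, the matrix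
`Ω = ρ⁻¹ C − ρ⁻¹ C U Λ₂ Uᵀ − ρ⁻¹ U Λ₂ Uᵀ C + ρ⁻¹ U {Λ₃ ∘ (Uᵀ C U)} Uᵀ`
satisfies `2⁻¹ S Ω + 2⁻¹ Ω S + ρ Ω = C`, where `∘` is the Hadamard product. -/
theorem stmt_4 (p m : ℕ) (hp : 0 < p) (hm : 0 < m)
    (U : Matrix (Fin p) (Fin m) ℝ) (hU : Uᵀ * U = 1)
    (τ : Fin m → ℝ) (hτ : ∀ i, 0 ≤ τ i)
    (Λ : Matrix (Fin m) (Fin m) ℝ) (hΛ : Λ = Matrix.diagonal τ)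
    (S : Matrix (Fin p) (Fin p) ℝ) (hS : S = U * Λ * Uᵀ)
    (ρ : ℝ) (hρ : 0 < ρ)
    (Λ₂ : Matrix (Fin m) (Fin m) ℝ)
    (hΛ₂ : Λ₂ = Matrix.diagonal (fun i => τ i / (τ i + 2 * ρ)))
    (Λ₃ : Matrix (Fin m) (Fin m) ℝ)
    (hΛ₃ : Λ₃ = fun i j => τ i * τ j * (τ i + τ j + 4 * ρ) /
      ((τ i + 2 * ρ) * (τ j + 2 * ρ) * (τ i + τ j + 2 * ρ)))
    (C : Matrix (Fin p) (Fin p) ℝ)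
    (Ω : Matrix (Fin p) (Fin p) ℝ)
    (hΩ : Ω = ρ⁻¹ • C - ρ⁻¹ • (C * U * Λ₂ * Uᵀ) - ρ⁻¹ • (U * Λ₂ * Uᵀ * C)
      + ρ⁻¹ • (U * (Matrix.hadamard Λ₃ (Uᵀ * C * U)) * Uᵀ)) :
    (2⁻¹ : ℝ) • (S * Ω) + (2⁻¹ : ℝ) • (Ω * S) + ρ • Ω = C :=
  stmt_4_general p m U hU τ hτ Λ hΛ S hS ρ hρ Λ₂ hΛ₂ Λ₃ hΛ₃ C Ω hΩ
end

section
/- Let S = UΛUᵀ with UᵀU = I_m and ρ > 0. Then (2⁻¹S⊗I_p + 2⁻¹I_p⊗S + ρI_{p²})·{−ρ⁻¹(UΛ₂Uᵀ)⊗I_p} = −(2ρ)⁻¹(UΛUᵀ)⊗I_p − (2ρ)⁻¹(U⊗U)(Λ₂⊗Λ)(Uᵀ⊗Uᵀ). -/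
open Matrix Kronecker

/-!
Put `A = UΛUᵀ` and `B = UΛ₂Uᵀ`. Since `Uᵀ U = I` and `τ · τ/(τ + 2ρ) = τ - 2ρ · τ/(τ + 2ρ)`,
the two matrices satisfy `A B = A - 2ρ B`. Multiplying out, the `ρ B ⊗ I` terms cancel against
`2⁻¹ (A B) ⊗ I`, leaving `-(2ρ)⁻¹ (A ⊗ I + B ⊗ A)`, and `B ⊗ A = (U ⊗ U)(Λ₂ ⊗ Λ)(Uᵀ ⊗ Uᵀ)`.
-/

namespace Matrix

theorem diagonal_mul_diagonal_div_add {K m : Type*} [Field K] [Fintype m] [DecidableEq m]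
    (τ : m → K) (c : K) (h : ∀ i, τ i + c ≠ 0) :
    diagonal τ * diagonal (fun i => τ i / (τ i + c))
      = diagonal τ - c • diagonal (fun i => τ i / (τ i + c)) := by
  rw [diagonal_mul_diagonal, ← diagonal_smul, diagonal_sub]
  congr 1
  funext i
  simp only [Pi.smul_apply, smul_eq_mul]
  field_simp [h i]
  ring

theorem conj_mul_conj_of_transpose_mul_self {R m n : Type*} [Semiring R] [Fintype m]
    [DecidableEq m] [Fintype n] (U : Matrix n m R) (hU : Uᵀ * U = 1) (X Y : Matrix m m R) :
    (U * X * Uᵀ) * (U * Y * Uᵀ) = U * (X * Y) * Uᵀ := by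
  calc (U * X * Uᵀ) * (U * Y * Uᵀ) = U * X * (Uᵀ * U) * (Y * Uᵀ) := by
        simp only [Matrix.mul_assoc]
    _ = U * (X * Y) * Uᵀ := by rw [hU, Matrix.mul_one]; simp only [Matrix.mul_assoc]

theorem kronecker_mul_kronecker_mul_transpose_kronecker {R m n p q : Type*} [CommRing R]
    [Fintype m] [Fintype q] (U : Matrix n m R) (V : Matrix p q R)
    (X : Matrix m m R) (Y : Matrix q q R) :
    (U ⊗ₖ V) * (X ⊗ₖ Y) * (Uᵀ ⊗ₖ Vᵀ) = (U * X * Uᵀ) ⊗ₖ (V * Y * Vᵀ) := by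
  rw [← mul_kronecker_mul, ← mul_kronecker_mul]

theorem kroneckerSum_mul_kronecker_one_of_mul_eq_sub_smul {K n : Type*} [Field K]
    [NeZero (2 : K)] [Fintype n] [DecidableEq n] (A B : Matrix n n K) (ρ : K)
    (hAB : A * B = A - (2 * ρ) • B) :
    ((2⁻¹ : K) • (A ⊗ₖ (1 : Matrix n n K)) + (2⁻¹ : K) • ((1 : Matrix n n K) ⊗ₖ A)
        + ρ • (1 : Matrix (n × n) (n × n) K)) * (-(ρ⁻¹ • (B ⊗ₖ (1 : Matrix n n K))))
      = -((2 * ρ)⁻¹ • (A ⊗ₖ (1 : Matrix n n K))) - (2 * ρ)⁻¹ • (B ⊗ₖ A) := by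
  rw [sub_eq_add_neg, ← neg_smul] at hAB
  simp only [mul_neg, Matrix.add_mul, Matrix.smul_mul, Matrix.mul_smul, ← mul_kronecker_mul,
    Matrix.one_mul, Matrix.mul_one, hAB, add_kronecker, smul_kronecker]
  match_scalars <;> field_simp
  ring

end Matrix

theorem stmt_7_general (p m : ℕ)
    (U : Matrix (Fin p) (Fin m) ℝ) (hU : Uᵀ * U = 1)
    (τ : Fin m → ℝ) (hτ : ∀ i, 0 ≤ τ i)
    (Λ : Matrix (Fin m) (Fin m) ℝ) (hΛ : Λ = Matrix.diagonal τ)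
    (S : Matrix (Fin p) (Fin p) ℝ) (hS : S = U * Λ * Uᵀ)
    (ρ : ℝ) (hρ : 0 < ρ)
    (Λ₂ : Matrix (Fin m) (Fin m) ℝ)
    (hΛ₂ : Λ₂ = Matrix.diagonal (fun i => τ i / (τ i + 2 * ρ))) :
    ((2⁻¹ : ℝ) • (S ⊗ₖ (1 : Matrix (Fin p) (Fin p) ℝ))
        + (2⁻¹ : ℝ) • ((1 : Matrix (Fin p) (Fin p) ℝ) ⊗ₖ S)
        + ρ • (1 : Matrix (Fin p × Fin p) (Fin p × Fin p) ℝ))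
      * (-(ρ⁻¹ • ((U * Λ₂ * Uᵀ) ⊗ₖ (1 : Matrix (Fin p) (Fin p) ℝ))))
    = -((2 * ρ)⁻¹ • ((U * Λ * Uᵀ) ⊗ₖ (1 : Matrix (Fin p) (Fin p) ℝ)))
      - (2 * ρ)⁻¹ • ((U ⊗ₖ U) * (Λ₂ ⊗ₖ Λ) * (Uᵀ ⊗ₖ Uᵀ)) := by
  have hΛΛ₂ : Λ * Λ₂ = Λ - (2 * ρ) • Λ₂ := by
    subst hΛ hΛ₂
    exact diagonal_mul_diagonal_div_add τ (2 * ρ) fun i => by linarith [hτ i]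
  have hAB : (U * Λ * Uᵀ) * (U * Λ₂ * Uᵀ) = U * Λ * Uᵀ - (2 * ρ) • (U * Λ₂ * Uᵀ) := by
    rw [conj_mul_conj_of_transpose_mul_self U hU, hΛΛ₂, Matrix.mul_sub, Matrix.sub_mul,
      Matrix.mul_smul, Matrix.smul_mul]
  rw [kronecker_mul_kronecker_mul_transpose_kronecker, hS]
  exact kroneckerSum_mul_kronecker_one_of_mul_eq_sub_smul _ _ ρ hAB

/-- With `S = U Λ Uᵀ`, `Uᵀ U = I_m`, `ρ > 0`,
`(2⁻¹ S⊗I + 2⁻¹ I⊗S + ρI)·{−ρ⁻¹ (UΛ₂Uᵀ)⊗I}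
 = −(2ρ)⁻¹ (UΛUᵀ)⊗I − (2ρ)⁻¹ (U⊗U)(Λ₂⊗Λ)(Uᵀ⊗Uᵀ)`. -/
theorem stmt_7 (p m : ℕ) (hp : 0 < p) (hm : 0 < m)
    (U : Matrix (Fin p) (Fin m) ℝ) (hU : Uᵀ * U = 1)
    (τ : Fin m → ℝ) (hτ : ∀ i, 0 ≤ τ i)
    (Λ : Matrix (Fin m) (Fin m) ℝ) (hΛ : Λ = Matrix.diagonal τ)
    (S : Matrix (Fin p) (Fin p) ℝ) (hS : S = U * Λ * Uᵀ)
    (ρ : ℝ) (hρ : 0 < ρ)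
    (Λ₂ : Matrix (Fin m) (Fin m) ℝ)
    (hΛ₂ : Λ₂ = Matrix.diagonal (fun i => τ i / (τ i + 2 * ρ))) :
    ((2⁻¹ : ℝ) • (S ⊗ₖ (1 : Matrix (Fin p) (Fin p) ℝ))
        + (2⁻¹ : ℝ) • ((1 : Matrix (Fin p) (Fin p) ℝ) ⊗ₖ S)
        + ρ • (1 : Matrix (Fin p × Fin p) (Fin p × Fin p) ℝ))
      * (-(ρ⁻¹ • ((U * Λ₂ * Uᵀ) ⊗ₖ (1 : Matrix (Fin p) (Fin p) ℝ))))
    = -((2 * ρ)⁻¹ • ((U * Λ * Uᵀ) ⊗ₖ (1 : Matrix (Fin p) (Fin p) ℝ)))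
      - (2 * ρ)⁻¹ • ((U ⊗ₖ U) * (Λ₂ ⊗ₖ Λ) * (Uᵀ ⊗ₖ Uᵀ)) :=
  stmt_7_general p m U hU τ hτ Λ hΛ S hS ρ hρ Λ₂ hΛ₂
end

section
/- Let S = UΛUᵀ with UᵀU = I_m and ρ > 0. Then (2⁻¹S⊗I_p + 2⁻¹I_p⊗S + ρI_{p²})·{ρ⁻¹(U⊗U)·diag{vec(Λ₃)}·(Uᵀ⊗Uᵀ)} = (2ρ)⁻¹(U⊗U)·diag{vec(Λ₃Λ + ΛΛ₃ + 2ρΛ₃)}·(Uᵀ⊗Uᵀ). -/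
open Matrix Kronecker

/-- With `S = U Λ Uᵀ`, `Uᵀ U = I_m`, `ρ > 0`,
`(2⁻¹ S⊗I + 2⁻¹ I⊗S + ρI)·{ρ⁻¹ (U⊗U) diag{vec(Λ₃)} (Uᵀ⊗Uᵀ)}
 = (2ρ)⁻¹ (U⊗U) diag{vec(Λ₃Λ + ΛΛ₃ + 2ρΛ₃)} (Uᵀ⊗Uᵀ)`. -/
theorem stmt_9 (p m : ℕ) (hp : 0 < p) (hm : 0 < m)
    (U : Matrix (Fin p) (Fin m) ℝ) (hU : Uᵀ * U = 1)
    (τ : Fin m → ℝ) (hτ : ∀ i, 0 ≤ τ i)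
    (Λ : Matrix (Fin m) (Fin m) ℝ) (hΛ : Λ = Matrix.diagonal τ)
    (S : Matrix (Fin p) (Fin p) ℝ) (hS : S = U * Λ * Uᵀ)
    (ρ : ℝ) (hρ : 0 < ρ)
    (Λ₃ : Matrix (Fin m) (Fin m) ℝ)
    (hΛ₃ : Λ₃ = fun i j => τ i * τ j * (τ i + τ j + 4 * ρ) /
      ((τ i + 2 * ρ) * (τ j + 2 * ρ) * (τ i + τ j + 2 * ρ))) :
    ((2⁻¹ : ℝ) • (S ⊗ₖ (1 : Matrix (Fin p) (Fin p) ℝ))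
        + (2⁻¹ : ℝ) • ((1 : Matrix (Fin p) (Fin p) ℝ) ⊗ₖ S)
        + ρ • (1 : Matrix (Fin p × Fin p) (Fin p × Fin p) ℝ))
      * (ρ⁻¹ • ((U ⊗ₖ U)
          * Matrix.diagonal (fun q : Fin m × Fin m => Λ₃ q.1 q.2)
          * (Uᵀ ⊗ₖ Uᵀ)))
    = (2 * ρ)⁻¹ • ((U ⊗ₖ U)
        * Matrix.diagonal (fun q : Fin m × Fin m =>
            (Λ₃ * Λ + Λ * Λ₃ + (2 * ρ) • Λ₃) q.1 q.2)
        * (Uᵀ ⊗ₖ Uᵀ)) := by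
  have hρ' : ρ ≠ 0 := ne_of_gt hρ
  subst hΛ hS
  have hSU : (U * Matrix.diagonal τ * Uᵀ) * U = U * Matrix.diagonal τ := by
    rw [Matrix.mul_assoc, hU, Matrix.mul_one]
  have h1 : ((U * Matrix.diagonal τ * Uᵀ) ⊗ₖ (1 : Matrix (Fin p) (Fin p) ℝ)) * (U ⊗ₖ U)
      = (U ⊗ₖ U) * Matrix.diagonal (fun q : Fin m × Fin m => τ q.1) := by
    calc ((U * Matrix.diagonal τ * Uᵀ) ⊗ₖ (1 : Matrix (Fin p) (Fin p) ℝ)) * (U ⊗ₖ U)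
        = ((U * Matrix.diagonal τ * Uᵀ) * U) ⊗ₖ ((1 : Matrix (Fin p) (Fin p) ℝ) * U) := by
          rw [← Matrix.mul_kronecker_mul]
      _ = (U * Matrix.diagonal τ) ⊗ₖ (U * (1 : Matrix (Fin m) (Fin m) ℝ)) := by
          rw [hSU, Matrix.one_mul, Matrix.mul_one]
      _ = (U ⊗ₖ U) * (Matrix.diagonal τ ⊗ₖ (1 : Matrix (Fin m) (Fin m) ℝ)) := by
          rw [Matrix.mul_kronecker_mul]
      _ = (U ⊗ₖ U) * Matrix.diagonal (fun q : Fin m × Fin m => τ q.1) := by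
          rw [← Matrix.diagonal_one, Matrix.diagonal_kronecker_diagonal]
          simp
  have h2 : ((1 : Matrix (Fin p) (Fin p) ℝ) ⊗ₖ (U * Matrix.diagonal τ * Uᵀ)) * (U ⊗ₖ U)
      = (U ⊗ₖ U) * Matrix.diagonal (fun q : Fin m × Fin m => τ q.2) := by
    calc ((1 : Matrix (Fin p) (Fin p) ℝ) ⊗ₖ (U * Matrix.diagonal τ * Uᵀ)) * (U ⊗ₖ U)
        = ((1 : Matrix (Fin p) (Fin p) ℝ) * U) ⊗ₖ ((U * Matrix.diagonal τ * Uᵀ) * U) := by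
          rw [← Matrix.mul_kronecker_mul]
      _ = (U * (1 : Matrix (Fin m) (Fin m) ℝ)) ⊗ₖ (U * Matrix.diagonal τ) := by
          rw [hSU, Matrix.one_mul, Matrix.mul_one]
      _ = (U ⊗ₖ U) * ((1 : Matrix (Fin m) (Fin m) ℝ) ⊗ₖ Matrix.diagonal τ) := by
          rw [Matrix.mul_kronecker_mul]
      _ = (U ⊗ₖ U) * Matrix.diagonal (fun q : Fin m × Fin m => τ q.2) := by
          rw [← Matrix.diagonal_one, Matrix.diagonal_kronecker_diagonal]
          simp
  have hdiag : ∀ (f : Fin m × Fin m → ℝ),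
      (2⁻¹ : ℝ) • Matrix.diagonal (fun q : Fin m × Fin m => τ q.1 * f q)
        + (2⁻¹ : ℝ) • Matrix.diagonal (fun q : Fin m × Fin m => τ q.2 * f q)
        + ρ • Matrix.diagonal f
      = Matrix.diagonal (fun q : Fin m × Fin m => (2⁻¹ * τ q.1 + 2⁻¹ * τ q.2 + ρ) * f q) := by
    intro f
    rw [← Matrix.diagonal_smul, ← Matrix.diagonal_smul, ← Matrix.diagonal_smul,
      Matrix.diagonal_add, Matrix.diagonal_add]
    exact congrArg Matrix.diagonal (funext fun q => by
      simp only [Pi.add_apply, Pi.smul_apply, smul_eq_mul]; ring)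
  have h1' : ∀ (f : Fin m × Fin m → ℝ),
      ((U * Matrix.diagonal τ * Uᵀ) ⊗ₖ (1 : Matrix (Fin p) (Fin p) ℝ))
        * ((U ⊗ₖ U) * (Matrix.diagonal f * (Uᵀ ⊗ₖ Uᵀ)))
      = (U ⊗ₖ U) * (Matrix.diagonal (fun q : Fin m × Fin m => τ q.1 * f q) * (Uᵀ ⊗ₖ Uᵀ)) := by
    intro f
    rw [← Matrix.mul_assoc, h1, Matrix.mul_assoc, ← Matrix.mul_assoc (Matrix.diagonal _),
      Matrix.diagonal_mul_diagonal]
  have h2' : ∀ (f : Fin m × Fin m → ℝ),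
      ((1 : Matrix (Fin p) (Fin p) ℝ) ⊗ₖ (U * Matrix.diagonal τ * Uᵀ))
        * ((U ⊗ₖ U) * (Matrix.diagonal f * (Uᵀ ⊗ₖ Uᵀ)))
      = (U ⊗ₖ U) * (Matrix.diagonal (fun q : Fin m × Fin m => τ q.2 * f q) * (Uᵀ ⊗ₖ Uᵀ)) := by
    intro f
    rw [← Matrix.mul_assoc, h2, Matrix.mul_assoc, ← Matrix.mul_assoc (Matrix.diagonal _),
      Matrix.diagonal_mul_diagonal]
  have expand : ∀ (f : Fin m × Fin m → ℝ),
      ((2⁻¹ : ℝ) • ((U * Matrix.diagonal τ * Uᵀ) ⊗ₖ (1 : Matrix (Fin p) (Fin p) ℝ))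
        + (2⁻¹ : ℝ) • ((1 : Matrix (Fin p) (Fin p) ℝ) ⊗ₖ (U * Matrix.diagonal τ * Uᵀ))
        + ρ • (1 : Matrix (Fin p × Fin p) (Fin p × Fin p) ℝ))
      * ((U ⊗ₖ U) * Matrix.diagonal f * (Uᵀ ⊗ₖ Uᵀ))
      = (U ⊗ₖ U) * Matrix.diagonal
          (fun q : Fin m × Fin m => (2⁻¹ * τ q.1 + 2⁻¹ * τ q.2 + ρ) * f q)
          * (Uᵀ ⊗ₖ Uᵀ) := by
    intro f
    rw [show (U ⊗ₖ U) * Matrix.diagonal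
          (fun q : Fin m × Fin m => (2⁻¹ * τ q.1 + 2⁻¹ * τ q.2 + ρ) * f q) * (Uᵀ ⊗ₖ Uᵀ)
        = (U ⊗ₖ U) * (((2⁻¹ : ℝ) • Matrix.diagonal (fun q : Fin m × Fin m => τ q.1 * f q)
            + (2⁻¹ : ℝ) • Matrix.diagonal (fun q : Fin m × Fin m => τ q.2 * f q)
            + ρ • Matrix.diagonal f) * (Uᵀ ⊗ₖ Uᵀ)) by rw [hdiag f, Matrix.mul_assoc]]
    simp only [Matrix.add_mul, Matrix.mul_add, Matrix.smul_mul, Matrix.mul_smul,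
      Matrix.mul_assoc, Matrix.one_mul]
    rw [← Matrix.mul_assoc U (Matrix.diagonal τ) Uᵀ, h1' f, h2' f]
  rw [Matrix.mul_smul, expand]
  rw [Matrix.mul_assoc (U ⊗ₖ U)]
  rw [Matrix.mul_assoc (U ⊗ₖ U)]
  rw [← Matrix.mul_smul, ← Matrix.smul_mul, ← Matrix.diagonal_smul]
  rw [← Matrix.mul_smul, ← Matrix.smul_mul, ← Matrix.diagonal_smul]
  congr 2
  exact congrArg Matrix.diagonal (funext fun q => by
    simp only [Pi.smul_apply, smul_eq_mul, Matrix.add_apply, Matrix.smul_apply,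
      Matrix.mul_diagonal, Matrix.diagonal_mul]
    field_simp
    ring)
end

section
/- Let Q be a real p×p orthogonal matrix (QᵀQ = I_p), a₁,…,a_p real numbers, Λ₀ = diag{a₁,…,a_p}, and ρ > 0. Define Ω = Qᵀ·diag{(a₁+√(a₁²+4ρ))/(2ρ),…,(a_p+√(a_p²+4ρ))/(2ρ)}·Q. Then Ω is positive definite (in particular invertible) and satisfies ρΩ − Ω⁻¹ = QᵀΛ₀Q. -/
/-!
Each `dᵢ = (aᵢ + √(aᵢ² + 4ρ)) / (2ρ)` is the positive root of `ρ x² - aᵢ x - 1 = 0`, so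
`ρ dᵢ - dᵢ⁻¹ = aᵢ`. Hence `D = diag dᵢ` is positive definite with `ρ D - D⁻¹ = Λ₀`, and
conjugating by the orthogonal `Q` preserves positive definiteness and commutes with inversion.
-/

open Matrix

section PositiveRoot

variable {ρ : ℝ}

lemma add_sqrt_sq_add_pos {c : ℝ} (hc : 0 < c) (a : ℝ) : 0 < a + √(a ^ 2 + c) := by
  have hsq := Real.sq_sqrt (show 0 ≤ a ^ 2 + c by positivity)
  nlinarith [Real.sqrt_nonneg (a ^ 2 + c)]

lemma positiveRoot_pos (hρ : 0 < ρ) (a : ℝ) : 0 < (a + √(a ^ 2 + 4 * ρ)) / (2 * ρ) :=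
  div_pos (add_sqrt_sq_add_pos (by positivity) a) (by positivity)

lemma positiveRoot_inv (hρ : 0 < ρ) (a : ℝ) :
    ((a + √(a ^ 2 + 4 * ρ)) / (2 * ρ))⁻¹ = (√(a ^ 2 + 4 * ρ) - a) / 2 := by
  refine inv_eq_of_mul_eq_one_right ?_
  have hsq := Real.sq_sqrt (show 0 ≤ a ^ 2 + 4 * ρ by positivity)
  field_simp
  linear_combination hsq

lemma mul_positiveRoot_sub_inv (hρ : 0 < ρ) (a : ℝ) :
    ρ * ((a + √(a ^ 2 + 4 * ρ)) / (2 * ρ)) - ((a + √(a ^ 2 + 4 * ρ)) / (2 * ρ))⁻¹ = a := by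
  rw [positiveRoot_inv hρ]
  field_simp
  ring

end PositiveRoot

section Conjugation

variable {n : Type*} [Fintype n] [DecidableEq n]

lemma inv_diagonal_of_ne_zero {K : Type*} [Field K] {d : n → K} (hd : ∀ i, d i ≠ 0) :
    (diagonal d)⁻¹ = diagonal d⁻¹ := by
  refine inv_eq_left_inv ?_
  rw [diagonal_mul_diagonal, ← diagonal_one]
  exact congrArg diagonal (funext fun i => inv_mul_cancel₀ (hd i))

lemma inv_mul_mul_of_mul_eq_one {R : Type*} [CommRing R] {B Q : Matrix n n R} (h : B * Q = 1)
    (A : Matrix n n R) : (B * A * Q)⁻¹ = B * A⁻¹ * Q := by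
  rw [Matrix.mul_inv_rev, Matrix.mul_inv_rev, inv_eq_left_inv h, inv_eq_right_inv h,
    Matrix.mul_assoc]

lemma Matrix.PosDef.transpose_mul_mul_of_orthogonal {Q A : Matrix n n ℝ} (hQ : Qᵀ * Q = 1)
    (hA : A.PosDef) : (Qᵀ * A * Q).PosDef := by
  have hinj : Function.Injective Q.mulVec :=
    Function.LeftInverse.injective (g := (Qᵀ *ᵥ ·)) fun x => by simp only [mulVec_mulVec, hQ, one_mulVec]
  simpa only [conjTranspose_eq_transpose_of_trivial] using hA.conjTranspose_mul_mul_same hinj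

end Conjugation

theorem stmt_10_general (p : ℕ)
    (Q : Matrix (Fin p) (Fin p) ℝ) (hQ : Qᵀ * Q = 1)
    (a : Fin p → ℝ)
    (Λ₀ : Matrix (Fin p) (Fin p) ℝ) (hΛ₀ : Λ₀ = Matrix.diagonal a)
    (ρ : ℝ) (hρ : 0 < ρ)
    (Ω : Matrix (Fin p) (Fin p) ℝ)
    (hΩ : Ω = Qᵀ * Matrix.diagonal
      (fun i => (a i + Real.sqrt ((a i) ^ 2 + 4 * ρ)) / (2 * ρ)) * Q) :
    Ω.PosDef ∧ IsUnit Ω ∧ ρ • Ω - Ω⁻¹ = Qᵀ * Λ₀ * Q := by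
  set d : Fin p → ℝ := fun i => (a i + √(a i ^ 2 + 4 * ρ)) / (2 * ρ)
  have hd : ∀ i, 0 < d i := fun i => positiveRoot_pos hρ (a i)
  have hΩpos : Ω.PosDef := hΩ ▸ (PosDef.diagonal hd).transpose_mul_mul_of_orthogonal hQ
  refine ⟨hΩpos, hΩpos.isUnit, ?_⟩
  have hdiag : ρ • diagonal d - diagonal d⁻¹ = Λ₀ := by
    rw [hΛ₀, ← diagonal_smul, diagonal_sub]
    exact congrArg diagonal (funext fun i => mul_positiveRoot_sub_inv hρ (a i))
  rw [hΩ, inv_mul_mul_of_mul_eq_one hQ, inv_diagonal_of_ne_zero fun i => (hd i).ne', ← hdiag,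
    Matrix.mul_sub, Matrix.sub_mul, Matrix.mul_smul, Matrix.smul_mul]

/-- For `Q` orthogonal (`QᵀQ = I`), `Λ₀ = diag{a₁,…,a_p}` and `ρ > 0`,
the matrix `Ω = Qᵀ diag{(aᵢ+√(aᵢ²+4ρ))/(2ρ)} Q` is positive definite (in particular
invertible) and satisfies `ρ Ω − Ω⁻¹ = Qᵀ Λ₀ Q`. -/
theorem stmt_10 (p : ℕ) (hp : 0 < p)
    (Q : Matrix (Fin p) (Fin p) ℝ) (hQ : Qᵀ * Q = 1)
    (a : Fin p → ℝ)
    (Λ₀ : Matrix (Fin p) (Fin p) ℝ) (hΛ₀ : Λ₀ = Matrix.diagonal a)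
    (ρ : ℝ) (hρ : 0 < ρ)
    (Ω : Matrix (Fin p) (Fin p) ℝ)
    (hΩ : Ω = Qᵀ * Matrix.diagonal
      (fun i => (a i + Real.sqrt ((a i) ^ 2 + 4 * ρ)) / (2 * ρ)) * Q) :
    Ω.PosDef ∧ IsUnit Ω ∧ ρ • Ω - Ω⁻¹ = Qᵀ * Λ₀ * Q :=
  stmt_10_general p Q hQ a Λ₀ hΛ₀ ρ hρ Ω hΩ
end
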